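/- Let α be strictly increasing on (a,b) and f regulated on (a,b). If at some point x ∈ (a,b) the derivative (D_α f)(x) exists and α^-(x) = α^+(x), then f^-(x) = f^+(x). -/

import Mathlib

/-!
As `h ↓ 0`, the left limits `f⁻(x+h)` tend to `f⁺(x)` and the right limits `f⁺(x-h)` to `f⁻(x)`,
so the numerator of the `α`-difference quotient tends to the jump `f⁺(x) - f⁻(x)`. For the same
reason the denominator tends to `α⁺(x) - α⁻(x) = 0`, and strict monotonicity keeps it nonzero.
Hence the numerator, being quotient times denominator, tends to `A · 0 = 0`, and the jump vanishes.
-/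

open Filter Topology Function Set MeasureTheory

/-- `x` lies in the interval `(a, b)` with extended-real endpoints. -/
def MemI (a b : EReal) (x : ℝ) : Prop := a < (x : EReal) ∧ (x : EReal) < b

/-- `f` is regulated on `(a, b)`: both one-sided limits exist (as real numbers)
at every point of `(a, b)`. -/
def RegulatedOn' (f : ℝ → ℝ) (a b : EReal) : Prop :=
  ∀ x : ℝ, MemI a b x →
    (∃ L : ℝ, Tendsto f (𝓝[<] x) (𝓝 L)) ∧ ∃ R : ℝ, Tendsto f (𝓝[>] x) (𝓝 R)

/-- The symmetric `α`-derivative of `f` at `x` equals `A`: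
`(D_α f)(x) = lim_{h↓0} (f⁻(x+h) - f⁺(x-h)) / (α⁻(x+h) - α⁺(x-h))`. -/
def HasDerivAlpha (f α : ℝ → ℝ) (x A : ℝ) : Prop :=
  Tendsto (fun h : ℝ =>
      (leftLim f (x + h) - rightLim f (x - h)) /
        (leftLim α (x + h) - rightLim α (x - h)))
    (𝓝[>] (0 : ℝ)) (𝓝 A)

/-- The filter of real numbers approaching `b : EReal` from the left (`x ↑ b`). -/
noncomputable def leftFilter (b : EReal) : Filter ℝ := comap (fun x : ℝ => (x : EReal)) (𝓝[<] b)

/-- The filter of real numbers approaching `a : EReal` from the right (`x ↓ a`). -/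
noncomputable def rightFilter (a : EReal) : Filter ℝ := comap (fun x : ℝ => (x : EReal)) (𝓝[>] a)

section LeftRightLim

variable {α β : Type*} [LinearOrder α] [TopologicalSpace α] [OrderTopology α] [TopologicalSpace β]
  {f : α → β} {a b : α}

/-- No left limits need to exist near `a`: where one fails, `leftLim f c` is the junk value `f c`,
which is close to `y` as well. -/
theorem tendsto_leftLim_nhdsGT_of_tendsto [T3Space β] {y : β} (h : Tendsto f (𝓝[>] a) (𝓝 y)) :
    Tendsto (leftLim f) (𝓝[>] a) (𝓝 y) := by
  rcases eq_or_neBot (𝓝[>] a) with ha | ha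
  · simp [ha]
  refine (closed_nhds_basis y).tendsto_right_iff.2 fun s ⟨hs, hs_closed⟩ => ?_
  obtain ⟨w, hw⟩ : (Ioi a).Nonempty := Filter.nonempty_of_mem (self_mem_nhdsWithin (a := a))
  obtain ⟨u, hau, hu⟩ := (mem_nhdsGT_iff_exists_Ioo_subset' hw).1 (h hs)
  filter_upwards [Ioo_mem_nhdsGT hau] with c hc
  refine hs_closed.mem_of_mapClusterPt (mapClusterPt_leftLim f c) ?_
  filter_upwards [Ioc_mem_nhdsLE hc.1] with t ht using hu ⟨ht.1, ht.2.trans_lt hc.2⟩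

theorem tendsto_rightLim_nhdsLT_of_tendsto [T3Space β] {y : β} (h : Tendsto f (𝓝[<] a) (𝓝 y)) :
    Tendsto (rightLim f) (𝓝[<] a) (𝓝 y) :=
  tendsto_leftLim_nhdsGT_of_tendsto (α := αᵒᵈ) h

section LinearOrder

variable [LinearOrder β] [OrderTopology β]

theorem MonotoneOn.le_leftLim (hf : MonotoneOn f (Icc a b)) (hab : a < b) :
    f a ≤ leftLim f b := by
  refine isClosed_Ici.mem_of_mapClusterPt (mapClusterPt_leftLim f b) ?_
  filter_upwards [Ioc_mem_nhdsLE hab] with t ht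
  exact hf (left_mem_Icc.2 hab.le) (Ioc_subset_Icc_self ht) ht.1.le

theorem MonotoneOn.rightLim_le (hf : MonotoneOn f (Icc a b)) (hab : a < b) :
    rightLim f a ≤ f b := by
  refine isClosed_Iic.mem_of_mapClusterPt (mapClusterPt_rightLim f a) ?_
  filter_upwards [Ico_mem_nhdsGE hab] with t ht
  exact hf (Ico_subset_Icc_self ht) (right_mem_Icc.2 hab.le) ht.2.le

theorem StrictMonoOn.rightLim_lt_leftLim [DenselyOrdered α] (hf : StrictMonoOn f (Icc a b))
    (hab : a < b) : rightLim f a < leftLim f b := by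
  obtain ⟨p, hap, hpb⟩ := exists_between hab
  obtain ⟨q, hpq, hqb⟩ := exists_between hpb
  have haq : a ≤ q := (hap.trans hpq).le
  calc rightLim f a ≤ f p := (hf.monotoneOn.mono (Icc_subset_Icc_right hpb.le)).rightLim_le hap
    _ < f q := hf ⟨hap.le, hpb.le⟩ ⟨haq, hqb.le⟩ hpq
    _ ≤ leftLim f b := (hf.monotoneOn.mono (Icc_subset_Icc_left haq)).le_leftLim hqb

end LinearOrder

section ConditionallyCompleteLinearOrder

variable [ConditionallyCompleteLinearOrder β] [OrderTopology β] {s : Set α}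

theorem MonotoneOn.tendsto_nhdsGT_rightLim (hf : MonotoneOn f s) (hs : s ∈ 𝓝[≥] a) :
    Tendsto f (𝓝[>] a) (𝓝 (rightLim f a)) := by
  rcases eq_or_neBot (𝓝[>] a) with ha | ha
  · simp [ha]
  obtain ⟨w, hw⟩ : (Ioi a).Nonempty := Filter.nonempty_of_mem (self_mem_nhdsWithin (a := a))
  obtain ⟨u, hau, hu⟩ := (mem_nhdsGE_iff_exists_Ico_subset' hw).1 hs
  have hbdd : BddBelow (f '' Ioo a u) := by
    refine ⟨f a, ?_⟩
    rintro _ ⟨t, ht, rfl⟩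
    exact hf (hu ⟨le_rfl, hau⟩) (hu (Ioo_subset_Ico_self ht)) ht.1.le
  have hmono : MonotoneOn f (Ioo a u) := hf.mono (Ioo_subset_Ico_self.trans hu)
  exact tendsto_rightLim_of_tendsto
    ⟨_, hmono.tendsto_nhdsWithin_Ioo_right (Filter.nonempty_of_mem (Ioo_mem_nhdsGT hau)) hbdd⟩

theorem MonotoneOn.tendsto_nhdsLT_leftLim (hf : MonotoneOn f s) (hs : s ∈ 𝓝[≤] a) :
    Tendsto f (𝓝[<] a) (𝓝 (leftLim f a)) :=
  MonotoneOn.tendsto_nhdsGT_rightLim (α := αᵒᵈ) (β := βᵒᵈ) hf.dual hs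

end ConditionallyCompleteLinearOrder

end LeftRightLim

theorem tendsto_const_add_nhdsGT_zero {H : Type*} [TopologicalSpace H] [AddCommGroup H]
    [PartialOrder H] [IsOrderedAddMonoid H] [ContinuousAdd H] (x : H) :
    Tendsto (x + ·) (𝓝[>] 0) (𝓝[>] x) := by
  rw [Tendsto, map_add_left_nhdsGT, add_zero]

theorem tendsto_const_sub_nhdsGT_zero {H : Type*} [TopologicalSpace H] [AddCommGroup H]
    [IsTopologicalAddGroup H] [PartialOrder H] [IsOrderedAddMonoid H] (x : H) :
    Tendsto (x - ·) (𝓝[>] 0) (𝓝[<] x) := by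
  rw [Tendsto, map_subLeft_nhdsGT, sub_zero]

theorem tendsto_zero_of_tendsto_div {ι 𝕜 : Type*} [Field 𝕜] [TopologicalSpace 𝕜] [ContinuousMul 𝕜]
    {l : Filter ι} {N D : ι → 𝕜} {A : 𝕜} (hND : Tendsto (fun i => N i / D i) l (𝓝 A))
    (hD : Tendsto D l (𝓝 0)) (hD_ne : ∀ᶠ i in l, D i ≠ 0) : Tendsto N l (𝓝 0) := by
  simpa using (hND.mul hD).congr' (hD_ne.mono fun i hi => div_mul_cancel₀ (N i) hi)

theorem tendsto_leftLim_add_sub_rightLim_sub {H E : Type*} [AddCommGroup H] [LinearOrder H]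
    [IsOrderedAddMonoid H] [TopologicalSpace H] [OrderTopology H] [NormedAddCommGroup E]
    {g : H → E} {x : H} {L R : E}
    (hL : Tendsto g (𝓝[<] x) (𝓝 L)) (hR : Tendsto g (𝓝[>] x) (𝓝 R)) :
    Tendsto (fun h => leftLim g (x + h) - rightLim g (x - h)) (𝓝[>] 0) (𝓝 (R - L)) :=
  ((tendsto_leftLim_nhdsGT_of_tendsto hR).comp (tendsto_const_add_nhdsGT_zero x)).sub
    ((tendsto_rightLim_nhdsLT_of_tendsto hL).comp (tendsto_const_sub_nhdsGT_zero x))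

theorem isOpen_setOf_memI (a b : EReal) : IsOpen {x : ℝ | MemI a b x} :=
  isOpen_Ioo.preimage continuous_coe_real_ereal

theorem stmt4_general (a b : EReal) (f α : ℝ → ℝ)
    (hf : RegulatedOn' f a b) (hα : StrictMonoOn α {x : ℝ | MemI a b x})
    (x A : ℝ) (hx : MemI a b x) (hD : HasDerivAlpha f α x A)
    (hcont : leftLim α x = rightLim α x) :
    leftLim f x = rightLim f x := by
  have hS : {y | MemI a b y} ∈ 𝓝 x := (isOpen_setOf_memI a b).mem_nhds hx
  obtain ⟨⟨L, hL⟩, R, hR⟩ := hf x hx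
  have hden := tendsto_leftLim_add_sub_rightLim_sub
    (hα.monotoneOn.tendsto_nhdsLT_leftLim (nhdsWithin_le_nhds hS))
    (hα.monotoneOn.tendsto_nhdsGT_rightLim (nhdsWithin_le_nhds hS))
  rw [hcont, sub_self] at hden
  have hden_ne : ∀ᶠ h in 𝓝[>] 0, leftLim α (x + h) - rightLim α (x - h) ≠ 0 := by
    filter_upwards [self_mem_nhdsWithin, nhdsWithin_le_nhds (eventually_closedBall_subset hS)]
      with h (h_pos : 0 < h) hball
    rw [Real.closedBall_eq_Icc] at hball
    exact sub_ne_zero.2 ((hα.mono hball).rightLim_lt_leftLim (by linarith)).ne'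
  have hjump := tendsto_nhds_unique (tendsto_leftLim_add_sub_rightLim_sub hL hR)
    (tendsto_zero_of_tendsto_div hD hden hden_ne)
  rw [leftLim_eq_of_tendsto hL, rightLim_eq_of_tendsto hR]
  linarith

/-- If `(D_α f)(x)` exists and `α⁻(x) = α⁺(x)`, then `f⁻(x) = f⁺(x)`. -/
theorem stmt4 (a b : EReal) (hab : a < b) (f α : ℝ → ℝ)
    (hf : RegulatedOn' f a b) (hα : StrictMonoOn α {x : ℝ | MemI a b x})
    (x A : ℝ) (hx : MemI a b x) (hD : HasDerivAlpha f α x A)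
    (hcont : leftLim α x = rightLim α x) :
    leftLim f x = rightLim f x :=
  stmt4_general a b f α hf hα x A hx hD hcont
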